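/- Let 𝔠 > 0 and let Λ be a Lorentz transformation whose (0,0)-entry λ₀₀ := Λ₀₀ is positive. Then for every p ∈ ℝ³, writing P = (√(𝔠²+|p|²), p) and p̃₀ for the time component of ΛP, one has (1/(2λ₀₀))·p₀ ≤ p̃₀ ≤ 2λ₀₀·p₀, where p₀ = √(𝔠²+|p|²). -/
import Mathlib


open Matrix

/-- The Minkowski matrix D = diag(1, -1, -1, -1). -/
noncomputable def minkD : Matrix (Fin 4) (Fin 4) ℝ := Matrix.diagonal ![1, -1, -1, -1]

/-- A real 4×4 matrix Λ is a Lorentz transformation if ΛᵀDΛ = D. -/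
def IsLorentz (Λ : Matrix (Fin 4) (Fin 4) ℝ) : Prop := Λᵀ * minkD * Λ = minkD

/-- The Euclidean norm on ℝ³. -/
noncomputable def norm3 (p : Fin 3 → ℝ) : ℝ := Real.sqrt (p 0 ^ 2 + p 1 ^ 2 + p 2 ^ 2)

/-- The mass-shell four-vector P = (√(c²+|p|²), p). -/
noncomputable def shell (c : ℝ) (p : Fin 3 → ℝ) : Fin 4 → ℝ :=
  Fin.cons (Real.sqrt (c ^ 2 + norm3 p ^ 2)) p

lemma minkD_sq : minkD * minkD = 1 := by
  ext i j
  fin_cases i <;> fin_cases j <;>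
    simp [minkD, Matrix.mul_apply, Fin.sum_univ_four, Matrix.one_apply]

lemma lorentz_row (Λ : Matrix (Fin 4) (Fin 4) ℝ) (hΛ : IsLorentz Λ) :
    Λ * minkD * Λᵀ = minkD := by
  have h1 : Λᵀ * (minkD * Λ * minkD) = 1 := by
    simp only [← mul_assoc]
    rw [hΛ]; exact minkD_sq
  have h2 : (minkD * Λ * minkD) * Λᵀ = 1 :=
    mul_eq_one_comm.mp h1
  calc Λ * minkD * Λᵀ = minkD * minkD * (Λ * minkD * Λᵀ) := by rw [minkD_sq, one_mul]
    _ = minkD * (minkD * Λ * minkD * Λᵀ) := by simp only [mul_assoc]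
    _ = minkD := by rw [h2, mul_one]

set_option maxHeartbeats 1000000 in
/-- For a Lorentz transformation Λ with positive (0,0)-entry λ₀₀, the time component p̃₀
of ΛP satisfies p₀/(2λ₀₀) ≤ p̃₀ ≤ 2λ₀₀p₀. -/
theorem lorentz_time_component_bounds (c : ℝ) (hc : 0 < c)
    (Λ : Matrix (Fin 4) (Fin 4) ℝ) (hΛ : IsLorentz Λ) (hL00 : 0 < Λ 0 0)
    (p : Fin 3 → ℝ) :
    Real.sqrt (c ^ 2 + norm3 p ^ 2) / (2 * Λ 0 0) ≤ Λ.mulVec (shell c p) 0 ∧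
    Λ.mulVec (shell c p) 0 ≤ 2 * Λ 0 0 * Real.sqrt (c ^ 2 + norm3 p ^ 2) := by
  have hrow := congrFun (congrFun (lorentz_row Λ hΛ) 0) 0
  simp [Matrix.mul_apply, minkD, Matrix.diagonal, Fin.sum_univ_four, Matrix.transpose_apply] at hrow
  -- hrow : Λ 0 0 * Λ 0 0 - Λ 0 1 * Λ 0 1 - Λ 0 2 * Λ 0 2 - Λ 0 3 * Λ 0 3 = 1 (some form)
  set l := Λ 0 0 with hl
  set a0 := Λ 0 1
  set a1 := Λ 0 2
  set a2 := Λ 0 3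
  set p0 := Real.sqrt (c ^ 2 + norm3 p ^ 2) with hp0
  have hn3 : norm3 p ^ 2 = p 0 ^ 2 + p 1 ^ 2 + p 2 ^ 2 := by
    rw [norm3, Real.sq_sqrt]; positivity
  have hp0sq : p0 ^ 2 = c ^ 2 + (p 0 ^ 2 + p 1 ^ 2 + p 2 ^ 2) := by
    rw [hp0, Real.sq_sqrt, hn3]; nlinarith [sq_nonneg (norm3 p)]
  have hp0pos : 0 < p0 := Real.sqrt_pos.mpr (by nlinarith [sq_nonneg (norm3 p)])
  have e0 : shell c p 0 = p0 := rfl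
  have e1 : shell c p 1 = p 0 := rfl
  have e2 : shell c p 2 = p 1 := rfl
  have e3 : shell c p 3 = p 2 := rfl
  have hmv : Λ.mulVec (shell c p) 0 = l * p0 + (a0 * p 0 + a1 * p 1 + a2 * p 2) := by
    simp only [Matrix.mulVec, dotProduct, Fin.sum_univ_four, e0, e1, e2, e3]
    ring
  clear_value l a0 a1 a2 p0
  obtain ⟨s, hs⟩ : ∃ s, a0 * p 0 + a1 * p 1 + a2 * p 2 = s := ⟨_, rfl⟩
  rw [hs] at hmv
  have hrel : l ^ 2 - a0 ^ 2 - a1 ^ 2 - a2 ^ 2 = 1 := by nlinarith [hrow]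
  have hCS : s ^ 2 ≤ (a0 ^ 2 + a1 ^ 2 + a2 ^ 2) * (p 0 ^ 2 + p 1 ^ 2 + p 2 ^ 2) := by
    rw [← hs]
    nlinarith [sq_nonneg (a0 * p 1 - a1 * p 0), sq_nonneg (a0 * p 2 - a2 * p 0),
      sq_nonneg (a1 * p 2 - a2 * p 1)]
  have hpn : p 0 ^ 2 + p 1 ^ 2 + p 2 ^ 2 ≤ p0 ^ 2 := by nlinarith
  have hl1 : 1 ≤ l := by nlinarith [sq_nonneg a0, sq_nonneg a1, sq_nonneg a2]
  have hs2 : s ^ 2 ≤ (l ^ 2 - 1) * p0 ^ 2 := by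
    nlinarith [sq_nonneg a0, sq_nonneg a1, sq_nonneg a2]
  set B := Real.sqrt (l ^ 2 - 1) with hBdef
  have hBn : 0 ≤ B := Real.sqrt_nonneg _
  have hB : B ^ 2 = l ^ 2 - 1 := Real.sq_sqrt (by nlinarith)
  have hBl : B ≤ l := by nlinarith
  have hsu : s ≤ B * p0 := by nlinarith [mul_nonneg hBn hp0pos.le]
  have hsl : -(B * p0) ≤ s := by nlinarith [mul_nonneg hBn hp0pos.le]
  rw [hmv]
  constructor
  · rw [div_le_iff₀ (by positivity)]
    nlinarith [mul_nonneg (sq_nonneg (l - B)) hp0pos.le]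
  · nlinarith [mul_le_mul_of_nonneg_right hBl hp0pos.le]
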